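/- For any strings u, v over Σ and any two distinct strings x, y over Σ: x ≺ y in V-order if and only if uxv ≺ uyv (where uxv and uyv denote the concatenations of u, x, v and of u, y, v respectively). -/

import Mathlib

/-!
Write `ancestor w m` for the string of length `m` in `w, w*, w^{2*}, …`. Unfolded, `x ≺ y`
says that `x` is a proper ancestor of `y`, or that at the first length where the ancestors of
`x` and `y` differ, the one of `x` is colexicographically smaller.

Let `ext` add a letter, in front or at the end. Then `ancestor (ext w) m = (ext (ancestor w m))*`,
and `(ext z)*` is either `z` or `ext z*`. So in colex order `ancestor (ext w) m` lies above
`ancestor w m`, and `ancestor (ext w) (m + 1)` above `ext (ancestor w m)`; these two bounds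
move the first difference between the paths of `x` and `y` to one between the paths of
`ext x` and `ext y`, at the same length or one higher. The comparison is total and asymmetric
on distinct strings, so it is reflected as well as preserved by `ext`.
-/
variable {α : Type*} [LinearOrder α]

/-- The star operation on strings: delete the letter `x_h`, where `h` is the
start of the longest non-decreasing suffix (so `h = 1` iff the whole string is
non-decreasing, and otherwise `x_{h-1} > x_h ≤ x_{h+1} ≤ ⋯ ≤ x_n`). -/
def vstar : List α → List α
  | [] => []
  | a :: t => if List.IsChain (· ≤ ·) (a :: t) then t else a :: vstar t

/-- V-order `≺` between distinct strings `x`, `y`: either `x` lies on the path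
`y, y*, y^{2*}, …, ε`, or (if neither lies on the path of the other) taking the
least `s, t` with `x^{(s+1)*} = y^{(t+1)*}` and the greatest position `j` at
which `s = x^{s*}` and `t = y^{t*}` differ, the letter of `x^{s*}` at `j` is
smaller than that of `y^{t*}`. -/
def VLess (x y : List α) : Prop :=
  (∃ k : ℕ, 0 < k ∧ vstar^[k] y = x) ∨
  ((¬ ∃ k : ℕ, vstar^[k] y = x) ∧ (¬ ∃ k : ℕ, vstar^[k] x = y) ∧
    ∃ s t : ℕ,
      vstar^[s + 1] x = vstar^[t + 1] y ∧
      (∀ s' t' : ℕ, vstar^[s' + 1] x = vstar^[t' + 1] y → s ≤ s' ∧ t ≤ t') ∧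
      ∃ j : ℕ, j < (vstar^[s] x).length ∧
        (∀ j' : ℕ, j < j' → (vstar^[s] x)[j']? = (vstar^[t] y)[j']?) ∧
        ∃ a b : α, (vstar^[s] x)[j]? = some a ∧ (vstar^[t] y)[j]? = some b ∧
          a < b)

def ColexLT : List α → List α → Prop
  | a :: A, b :: B => ColexLT A B ∨ (A = B ∧ a < b)
  | _, _ => False

def ColexLE (A B : List α) : Prop := A = B ∨ ColexLT A B

theorem colexLT_cons_cons {a b : α} {A B : List α} :
    ColexLT (a :: A) (b :: B) ↔ ColexLT A B ∨ (A = B ∧ a < b) := Iff.rfl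

@[simp] theorem not_colexLT_nil_left (B : List α) : ¬ ColexLT [] B := by
  cases B <;> simp [ColexLT]

@[simp] theorem not_colexLT_nil_right (A : List α) : ¬ ColexLT A [] := by
  cases A <;> simp [ColexLT]

theorem ColexLT.length_eq {A B : List α} (h : ColexLT A B) : A.length = B.length := by
  induction A generalizing B with
  | nil => simp at h
  | cons a A ih =>
    cases B with
    | nil => simp at h
    | cons b B =>
      rcases h with h | ⟨rfl, -⟩
      · simp [ih h]
      · rfl

theorem colexLT_irrefl (A : List α) : ¬ ColexLT A A := by
  induction A with
  | nil => simp
  | cons a A ih => rintro (h | ⟨-, h⟩) <;> simp_all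

theorem ColexLT.ne {A B : List α} (h : ColexLT A B) : A ≠ B := by
  rintro rfl
  exact colexLT_irrefl A h

theorem ColexLT.trans {A B C : List α} (h₁ : ColexLT A B) (h₂ : ColexLT B C) :
    ColexLT A C := by
  induction A generalizing B C with
  | nil => simp at h₁
  | cons a A ih =>
    rcases B with _ | ⟨b, B⟩
    · simp at h₁
    rcases C with _ | ⟨c, C⟩
    · simp at h₂
    rcases h₁ with h₁ | ⟨rfl, h₁⟩ <;> rcases h₂ with h₂ | ⟨rfl, h₂⟩
    · exact Or.inl (ih h₁ h₂)
    · exact Or.inl h₁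
    · exact Or.inl h₂
    · exact Or.inr ⟨rfl, h₁.trans h₂⟩

theorem ColexLT.asymm {A B : List α} (h₁ : ColexLT A B) (h₂ : ColexLT B A) : False :=
  colexLT_irrefl A (h₁.trans h₂)

theorem ColexLT.trans_le {A B C : List α} (h₁ : ColexLT A B) (h₂ : ColexLE B C) :
    ColexLT A C := by
  rcases h₂ with rfl | h₂
  exacts [h₁, h₁.trans h₂]

theorem colexLT_or_colexLT_of_ne {A B : List α} (hl : A.length = B.length) (hne : A ≠ B) :
    ColexLT A B ∨ ColexLT B A := by
  induction A generalizing B with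
  | nil => cases B <;> simp_all
  | cons a A ih =>
    rcases B with _ | ⟨b, B⟩
    · simp at hl
    by_cases hAB : A = B
    · subst hAB
      have hab : a ≠ b := fun h => hne (h ▸ rfl)
      rcases lt_or_gt_of_ne hab with h | h
      exacts [Or.inl (Or.inr ⟨rfl, h⟩), Or.inr (Or.inr ⟨rfl, h⟩)]
    · rcases ih (by simpa using hl) hAB with h | h
      exacts [Or.inl (Or.inl h), Or.inr (Or.inl h)]

theorem colexLT_append_left_iff (P : List α) {A B : List α} :
    ColexLT (P ++ A) (P ++ B) ↔ ColexLT A B := by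
  induction P with
  | nil => rfl
  | cons c P ih => simp [colexLT_cons_cons, ih]

theorem colexLT_append_right_iff (C : List α) {A B : List α} :
    ColexLT (A ++ C) (B ++ C) ↔ ColexLT A B := by
  induction A generalizing B with
  | nil =>
    refine iff_of_false (fun h => ?_) (not_colexLT_nil_left B)
    have := h.length_eq
    rcases B with _ | ⟨b, B⟩
    · exact colexLT_irrefl _ h
    · simp at this; omega
  | cons a A ih =>
    rcases B with _ | ⟨b, B⟩
    · refine iff_of_false (fun h => ?_) (not_colexLT_nil_right _)
      have := h.length_eq
      simp at this; omega
    · simp [colexLT_cons_cons, ih]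

theorem colexLT_append_singleton_cons {a c : α} {P : List α}
    (h : c < (a :: P).getLast (List.cons_ne_nil a P)) : ColexLT (P ++ [c]) (a :: P) := by
  induction P generalizing a with
  | nil => exact Or.inr ⟨rfl, h⟩
  | cons e P ih => exact Or.inl (ih (by simpa using h))

theorem colexLE_cons_append_singleton {a c : α} {P : List α}
    (hP : List.IsChain (· ≤ ·) (a :: P)) (h : (a :: P).getLast (List.cons_ne_nil a P) ≤ c) :
    ColexLE (a :: P) (P ++ [c]) := by
  induction P generalizing a with
  | nil => simpa [ColexLE, ColexLT, eq_comm, le_iff_eq_or_lt] using h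
  | cons e P ih =>
    have hae : a ≤ e := (List.isChain_cons_cons.1 hP).1
    rcases ih (List.isChain_cons_cons.1 hP).2 (by simpa using h) with heq | hlt
    · rcases hae.eq_or_lt with rfl | hae
      · exact Or.inl (by rw [List.cons_append, ← heq])
      · exact Or.inr (Or.inr ⟨heq, hae⟩)
    · exact Or.inr (Or.inl hlt)

theorem colexLT_iff_exists_getElem? {A B : List α} (hl : A.length = B.length) :
    ColexLT A B ↔ ∃ j : ℕ, j < A.length ∧ (∀ j' : ℕ, j < j' → A[j']? = B[j']?) ∧
      ∃ a b : α, A[j]? = some a ∧ B[j]? = some b ∧ a < b := by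
  induction A generalizing B with
  | nil => simp
  | cons a A ih =>
    rcases B with _ | ⟨b, B⟩
    · simp at hl
    rw [colexLT_cons_cons, ih (by simpa using hl)]
    constructor
    · rintro (⟨j, hj, hup, a', b', ha, hb, hab⟩ | ⟨rfl, hab⟩)
      · refine ⟨j + 1, by simpa using hj, fun j' hj' => ?_, a', b', by simpa, by simpa, hab⟩
        obtain ⟨j', rfl⟩ := Nat.exists_eq_add_of_lt (Nat.zero_lt_of_lt hj')
        simpa using hup j' (by omega)
      · exact ⟨0, by simp, fun j' hj' => by cases j' <;> simp_all, a, b, rfl, rfl, hab⟩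
    · rintro ⟨_ | j, hj, hup, a', b', ha, hb, hab⟩
      · refine Or.inr ⟨List.ext_getElem? fun n => by simpa using hup (n + 1) (by omega), ?_⟩
        simp_all
      · refine Or.inl ⟨j, by simpa using hj,
          fun j' hj' => by simpa using hup (j' + 1) (by omega),
          a', b', by simpa using ha, by simpa using hb, hab⟩

theorem vstar_of_isChain {z : List α} (h : List.IsChain (· ≤ ·) z) : vstar z = z.tail := by
  cases z with
  | nil => rfl
  | cons a t => simp [vstar, h]

-- `c :: Q` is the longest non-decreasing suffix, so `c` is the deleted letter.
theorem vstar_append_cons {P Q : List α} {c : α} (hQ : List.IsChain (· ≤ ·) (c :: Q))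
    (hP : ∀ e ∈ P.getLast?, c < e) : vstar (P ++ c :: Q) = P ++ Q := by
  induction P with
  | nil => simp [vstar_of_isChain hQ]
  | cons a P ih =>
    have hnot : ¬ List.IsChain (· ≤ ·) (a :: (P ++ c :: Q)) := fun h => by
      rw [← List.cons_append] at h
      have hlast := List.getLast?_eq_some_getLast (List.cons_ne_nil a P)
      exact (hP _ hlast).not_ge ((List.isChain_append.1 h).2.2 _ hlast c rfl)
    rw [List.cons_append, vstar, if_neg hnot, ih fun e he => hP e ?_, List.cons_append]
    cases P <;> simp_all

theorem exists_eq_append_cons_isChain {z : List α} (hz : z ≠ []) :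
    ∃ P c Q, z = P ++ c :: Q ∧ List.IsChain (· ≤ ·) (c :: Q) ∧
      ∀ e ∈ P.getLast?, c < e := by
  induction z with
  | nil => exact absurd rfl hz
  | cons a t ih =>
    by_cases h : List.IsChain (· ≤ ·) (a :: t)
    · exact ⟨[], a, t, rfl, h, by simp⟩
    have ht : t ≠ [] := by rintro rfl; exact h (List.isChain_singleton a)
    obtain ⟨P, c, Q, rfl, hQ, hP⟩ := ih ht
    refine ⟨a :: P, c, Q, rfl, hQ, fun e he => ?_⟩
    rcases P with _ | ⟨p, P⟩
    · simp only [List.getLast?_singleton, Option.mem_def, Option.some.injEq] at he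
      subst he
      exact lt_of_not_ge fun hec => h (List.isChain_cons_cons.2 ⟨hec, hQ⟩)
    · exact hP e (by simpa using he)

theorem length_vstar (z : List α) : (vstar z).length = z.length - 1 := by
  rcases eq_or_ne z [] with rfl | hz
  · rfl
  obtain ⟨P, c, Q, rfl, hQ, hP⟩ := exists_eq_append_cons_isChain hz
  simp [vstar_append_cons hQ hP]

theorem length_iterate_vstar (z : List α) (k : ℕ) : (vstar^[k] z).length = z.length - k := by
  induction k with
  | zero => rfl
  | succ k ih => rw [Function.iterate_succ_apply', length_vstar, ih]; omega

/-- The string of length `m` in the sequence `w, w*, w^{2*}, …`; it is `w` when `m > |w|`. -/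
def ancestor (w : List α) (m : ℕ) : List α := vstar^[w.length - m] w

theorem length_ancestor {w : List α} {m : ℕ} (hm : m ≤ w.length) :
    (ancestor w m).length = m := by
  rw [ancestor, length_iterate_vstar]; omega

@[simp] theorem ancestor_length (w : List α) : ancestor w w.length = w := by
  simp [ancestor]

@[simp] theorem ancestor_zero (w : List α) : ancestor w 0 = [] := by
  simpa using length_ancestor (w := w) (Nat.zero_le _)

theorem iterate_vstar_eq_ancestor (w : List α) (k : ℕ) :
    vstar^[k] w = ancestor w (w.length - k) := by
  rcases le_total k w.length with hk | hk
  · rw [ancestor, Nat.sub_sub_self hk]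
  · rw [List.length_eq_zero_iff.1 (by rw [length_iterate_vstar]; omega : (vstar^[k] w).length = 0),
      Nat.sub_eq_zero_of_le hk, ancestor_zero]

theorem ancestor_ancestor {w : List α} {m l : ℕ} (hml : m ≤ l) (hl : l ≤ w.length) :
    ancestor (ancestor w l) m = ancestor w m := by
  rw [ancestor, length_ancestor hl, ancestor, ancestor, ← Function.iterate_add_apply]
  congr 1
  omega

theorem vstar_ancestor_succ {w : List α} {m : ℕ} (hm : m < w.length) :
    vstar (ancestor w (m + 1)) = ancestor w m := by
  rw [ancestor, ancestor, ← Function.iterate_succ_apply' vstar]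
  congr 1
  omega

theorem ancestor_eq_of_ancestor_eq {x y : List α} {m l : ℕ} (h : ancestor x l = ancestor y l)
    (hml : m ≤ l) (hx : l ≤ x.length) (hy : l ≤ y.length) : ancestor x m = ancestor y m := by
  rw [← ancestor_ancestor hml hx, h, ancestor_ancestor hml hy]

def PathLT (x y : List α) : Prop :=
  (x.length < y.length ∧ ancestor y x.length = x) ∨
  ∃ m, m < x.length ∧ m < y.length ∧ ancestor x m = ancestor y m ∧
    ColexLT (ancestor x (m + 1)) (ancestor y (m + 1))

theorem PathLT.asymm {x y : List α} (h₁ : PathLT x y) (h₂ : PathLT y x) : False := by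
  have key : ∀ {x y : List α} {m}, x.length < y.length → ancestor y x.length = x →
      m < x.length → ancestor y (m + 1) = ancestor x (m + 1) := fun hl hxy hm =>
    ancestor_eq_of_ancestor_eq (by rw [hxy, ancestor_length]) hm hl.le le_rfl
  rcases h₁ with ⟨hlt, hxy⟩ | ⟨m, hmx, hmy, hm, hlt⟩ <;>
    rcases h₂ with ⟨hlt', hyx⟩ | ⟨m', hmy', hmx', hm', hlt'⟩
  · omega
  · rw [key hlt hxy hmx'] at hlt'
    exact colexLT_irrefl _ hlt'
  · rw [key hlt' hyx hmy] at hlt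
    exact colexLT_irrefl _ hlt
  · rcases lt_trichotomy m m' with h | rfl | h
    · rw [ancestor_eq_of_ancestor_eq hm' h hmy'.le hmx'.le] at hlt
      exact colexLT_irrefl _ hlt
    · exact hlt.asymm hlt'
    · rw [ancestor_eq_of_ancestor_eq hm h hmx.le hmy.le] at hlt'
      exact colexLT_irrefl _ hlt'

theorem exists_ancestor_eq_ne_succ {x y : List α} {n : ℕ} (h : ancestor x n ≠ ancestor y n) :
    ∃ m < n, ancestor x m = ancestor y m ∧ ancestor x (m + 1) ≠ ancestor y (m + 1) := by
  induction n with
  | zero => simp at h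
  | succ n ih =>
    by_cases hn : ancestor x n = ancestor y n
    · exact ⟨n, n.lt_succ_self, hn, h⟩
    · obtain ⟨m, hm, hm'⟩ := ih hn
      exact ⟨m, by omega, hm'⟩

theorem pathLT_or_pathLT_of_ne {x y : List α} (hxy : x ≠ y) : PathLT x y ∨ PathLT y x := by
  set n := min x.length y.length
  by_cases h : ancestor x n = ancestor y n
  · rcases lt_trichotomy x.length y.length with hl | hl | hl
    · refine Or.inl (Or.inl ⟨hl, ?_⟩)
      rw [show n = x.length by omega, ancestor_length] at h
      exact h.symm
    · rw [show n = x.length by omega, ancestor_length, hl, ancestor_length] at h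
      exact absurd h hxy
    · refine Or.inr (Or.inl ⟨hl, ?_⟩)
      rw [show n = y.length by omega, ancestor_length] at h
      exact h
  · obtain ⟨m, hm, hagree, hne⟩ := exists_ancestor_eq_ne_succ h
    have hl : (ancestor x (m + 1)).length = (ancestor y (m + 1)).length := by
      rw [length_ancestor (by omega), length_ancestor (by omega)]
    rcases colexLT_or_colexLT_of_ne hl hne with hlt | hlt
    · exact Or.inl (Or.inr ⟨m, by omega, by omega, hagree, hlt⟩)
    · exact Or.inr (Or.inr ⟨m, by omega, by omega, hagree.symm, hlt⟩)

theorem exists_iterate_vstar_eq_iff {x y : List α} :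
    (∃ k, vstar^[k] y = x) ↔ x.length ≤ y.length ∧ ancestor y x.length = x := by
  constructor
  · rintro ⟨k, rfl⟩
    rw [iterate_vstar_eq_ancestor, length_ancestor (Nat.sub_le _ _)]
    exact ⟨Nat.sub_le _ _, rfl⟩
  · rintro ⟨hl, hxy⟩
    refine ⟨y.length - x.length, ?_⟩
    rwa [iterate_vstar_eq_ancestor, Nat.sub_sub_self hl]

theorem VLess.pathLT {x y : List α} (hxy : x ≠ y) (h : VLess x y) : PathLT x y := by
  rcases h with ⟨k, hk, hx⟩ | ⟨-, -, s, t, heq, -, j, hj, hup, a, b, ha, hb, hab⟩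
  · obtain ⟨hl, hyx⟩ := exists_iterate_vstar_eq_iff.1 ⟨k, hx⟩
    refine Or.inl ⟨lt_of_le_of_ne hl fun hl' => hxy ?_, hyx⟩
    rw [← hyx, hl', ancestor_length]
  · have hjy : j < y.length - t := by
      simpa only [length_iterate_vstar] using (List.getElem?_eq_some_iff.1 hb).1
    have hl : x.length - (s + 1) = y.length - (t + 1) := by
      simpa only [length_iterate_vstar] using congrArg List.length heq
    simp only [length_iterate_vstar] at hj
    simp only [iterate_vstar_eq_ancestor] at heq ha hb hup
    -- `x^{s*}` and `y^{t*}` are nonempty with equal stars, so both are ancestors of length `m + 1`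
    obtain ⟨m, hm⟩ : ∃ m, x.length - (s + 1) = m := ⟨_, rfl⟩
    have hxs : x.length - s = m + 1 := by omega
    have hyt : y.length - t = m + 1 := by omega
    rw [hxs] at ha hup
    rw [hyt] at hb hup
    rw [hm, show y.length - (t + 1) = m by omega] at heq
    refine Or.inr ⟨m, by omega, by omega, heq, ?_⟩
    rw [colexLT_iff_exists_getElem? (by rw [length_ancestor, length_ancestor] <;> omega)]
    exact ⟨j, by rw [length_ancestor] <;> omega, hup, a, b, ha, hb, hab⟩

theorem PathLT.vless {x y : List α} (h : PathLT x y) : VLess x y := by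
  rcases h with ⟨hl, hyx⟩ | ⟨m, hmx, hmy, hagree, hlt⟩
  · refine Or.inl ⟨y.length - x.length, by omega, ?_⟩
    rwa [iterate_vstar_eq_ancestor, Nat.sub_sub_self hl.le]
  have not_iterate : ∀ {x y : List α}, m < x.length →
      ancestor x (m + 1) ≠ ancestor y (m + 1) → ¬ ∃ k, vstar^[k] y = x := by
    intro x y hmx hne hk
    obtain ⟨hl, hyx⟩ := exists_iterate_vstar_eq_iff.1 hk
    exact hne (ancestor_eq_of_ancestor_eq ((ancestor_length _).trans hyx.symm) hmx le_rfl hl)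
  refine Or.inr ⟨not_iterate hmx hlt.ne, not_iterate hmy hlt.ne.symm,
    x.length - (m + 1), y.length - (m + 1), ?_, fun s' t' h' => ?_, ?_⟩
  · simp only [iterate_vstar_eq_ancestor]
    rwa [show x.length - (x.length - (m + 1) + 1) = m by omega,
      show y.length - (y.length - (m + 1) + 1) = m by omega]
  · -- a common iterate of length at least `m + 1` would make the ancestors agree at `m + 1`
    simp only [iterate_vstar_eq_ancestor] at h'
    have hl := congrArg List.length h'
    rw [length_ancestor (Nat.sub_le _ _), length_ancestor (Nat.sub_le _ _)] at hl
    rw [← hl] at h'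
    by_contra hc
    exact hlt.ne (ancestor_eq_of_ancestor_eq h' (by omega) (Nat.sub_le _ _) (by omega))
  · rw [iterate_vstar_eq_ancestor, iterate_vstar_eq_ancestor, Nat.sub_sub_self hmx,
      Nat.sub_sub_self hmy, ← colexLT_iff_exists_getElem?]
    · exact hlt
    · rw [length_ancestor hmx, length_ancestor hmy]

theorem vless_iff_pathLT {x y : List α} (hxy : x ≠ y) : VLess x y ↔ PathLT x y :=
  ⟨VLess.pathLT hxy, PathLT.vless⟩

/-- Adding one letter to a string, abstracting `a :: ·` and `· ++ [b]` (see `cons`, `concat`). -/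
structure VStarExtension (α : Type*) [LinearOrder α] where
  ext : List α → List α
  Stable : List α → Prop
  length_ext (z : List α) : (ext z).length = z.length + 1
  vstar_ext_of_stable {z : List α} : Stable z → vstar (ext z) = z
  vstar_ext_of_not_stable {z : List α} : ¬ Stable z → vstar (ext z) = ext (vstar z)
  stable_vstar {z : List α} : Stable z → Stable (vstar z)
  colexLT_ext {A B : List α} : ColexLT A B → ColexLT (ext A) (ext B)
  ext_vstar_le {z : List α} : Stable z → z ≠ [] → ColexLE (ext (vstar z)) z
  le_ext_vstar {z : List α} : ¬ Stable z → ColexLE z (ext (vstar z))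

namespace VStarExtension

variable (E : VStarExtension α)

theorem ext_injective : Function.Injective E.ext := fun x y h => by
  by_contra hxy
  have hl : x.length = y.length := by simpa [E.length_ext] using congrArg List.length h
  rcases colexLT_or_colexLT_of_ne hl hxy with hlt | hlt <;>
    exact colexLT_irrefl _ (h ▸ E.colexLT_ext hlt)

theorem vstar_vstar_ext (z : List α) : vstar (vstar (E.ext z)) = vstar (E.ext (vstar z)) := by
  by_cases hz : E.Stable z
  · rw [E.vstar_ext_of_stable hz, E.vstar_ext_of_stable (E.stable_vstar hz)]
  · rw [E.vstar_ext_of_not_stable hz]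

theorem ancestor_ext {w : List α} {m : ℕ} (hm : m ≤ w.length) :
    ancestor (E.ext w) m = vstar (E.ext (ancestor w m)) := by
  induction hm using Nat.decreasingInduction with
  | self => rw [← vstar_ancestor_succ (by simp [E.length_ext]), ← E.length_ext, ancestor_length,
      ancestor_length]
  | of_succ k hk ih =>
    rw [← vstar_ancestor_succ (by rw [E.length_ext]; omega), ih, E.vstar_vstar_ext,
      vstar_ancestor_succ hk]

theorem ancestor_ext_length (w : List α) : ancestor (E.ext w) (w.length + 1) = E.ext w := by
  rw [← E.length_ext, ancestor_length]

theorem ancestor_ext_eq {x y : List α} {m : ℕ} (hx : m ≤ x.length) (hy : m ≤ y.length)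
    (h : ancestor x m = ancestor y m) : ancestor (E.ext x) m = ancestor (E.ext y) m := by
  rw [E.ancestor_ext hx, E.ancestor_ext hy, h]

theorem ancestor_ext_of_stable {w : List α} {m : ℕ} (hm : m ≤ w.length)
    (hs : E.Stable (ancestor w m)) : ancestor (E.ext w) m = ancestor w m := by
  rw [E.ancestor_ext hm, E.vstar_ext_of_stable hs]

theorem ancestor_ext_of_not_stable {w : List α} {m : ℕ} (hm : m < w.length)
    (hs : ¬ E.Stable (ancestor w (m + 1))) :
    ancestor (E.ext w) (m + 1) = E.ext (ancestor w m) := by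
  rw [E.ancestor_ext hm, E.vstar_ext_of_not_stable hs, vstar_ancestor_succ hm]

theorem ancestor_ext_succ_of_not_stable {w : List α} {m : ℕ} (hm : m < w.length)
    (hs : ¬ E.Stable (ancestor w (m + 1))) :
    ancestor (E.ext w) (m + 2) = E.ext (ancestor w (m + 1)) := by
  rcases (show m + 1 ≤ w.length from hm).eq_or_lt with h | h
  · rw [show m + 2 = w.length + 1 by omega, h, ancestor_ext_length, ancestor_length]
  · refine E.ancestor_ext_of_not_stable h fun hs' => hs ?_
    rw [← vstar_ancestor_succ h]
    exact E.stable_vstar hs'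

theorem ancestor_le_ancestor_ext {w : List α} {m : ℕ} (hm : m ≤ w.length) :
    ColexLE (ancestor w m) (ancestor (E.ext w) m) := by
  rw [E.ancestor_ext hm]
  by_cases hs : E.Stable (ancestor w m)
  · exact Or.inl (E.vstar_ext_of_stable hs).symm
  · rw [E.vstar_ext_of_not_stable hs]
    exact E.le_ext_vstar hs

theorem ext_ancestor_le_ancestor_ext {w : List α} {m : ℕ} (hm : m ≤ w.length) :
    ColexLE (E.ext (ancestor w m)) (ancestor (E.ext w) (m + 1)) := by
  rcases hm.eq_or_lt with rfl | hm
  · rw [ancestor_ext_length, ancestor_length]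
    exact Or.inl rfl
  rw [E.ancestor_ext hm, ← vstar_ancestor_succ hm]
  by_cases hs : E.Stable (ancestor w (m + 1))
  · rw [E.vstar_ext_of_stable hs]
    refine E.ext_vstar_le hs fun h => ?_
    simpa [h] using length_ancestor hm
  · rw [E.vstar_ext_of_not_stable hs]
    exact Or.inl rfl

theorem pathLT_ext {x y : List α} (h : PathLT x y) : PathLT (E.ext x) (E.ext y) := by
  simp only [PathLT, E.length_ext]
  rcases h with ⟨hlt, hyx⟩ | ⟨m, hmx, hmy, hagree, hlt⟩
  · have hagree : ancestor (E.ext x) x.length = ancestor (E.ext y) x.length :=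
      E.ancestor_ext_eq le_rfl hlt.le (by rw [hyx, ancestor_length])
    rcases E.ext_ancestor_le_ancestor_ext hlt.le with heq | hlt'
    · exact Or.inl ⟨by omega, by rw [← heq, hyx]⟩
    · rw [hyx, ← E.ancestor_ext_length] at hlt'
      exact Or.inr ⟨x.length, by omega, by omega, hagree, hlt'⟩
  have hagree' := E.ancestor_ext_eq hmx.le hmy.le hagree
  by_cases hs : E.Stable (ancestor x (m + 1))
  · refine Or.inr ⟨m, by omega, by omega, hagree', ?_⟩
    rw [E.ancestor_ext_of_stable hmx hs]
    exact hlt.trans_le (E.ancestor_le_ancestor_ext hmy)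
  have hx₁ : ancestor (E.ext x) (m + 1) = E.ext (ancestor y m) := by
    rw [E.ancestor_ext_of_not_stable hmx hs, hagree]
  rcases E.ext_ancestor_le_ancestor_ext hmy.le with heq | hlt'
  · refine Or.inr ⟨m + 1, by omega, by omega, hx₁.trans heq, ?_⟩
    rw [E.ancestor_ext_succ_of_not_stable hmx hs]
    exact (E.colexLT_ext hlt).trans_le (E.ext_ancestor_le_ancestor_ext hmy)
  · exact Or.inr ⟨m, by omega, by omega, hagree', hx₁ ▸ hlt'⟩

theorem pathLT_ext_iff {x y : List α} (hxy : x ≠ y) :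
    PathLT (E.ext x) (E.ext y) ↔ PathLT x y := by
  refine ⟨fun h => ?_, E.pathLT_ext⟩
  rcases pathLT_or_pathLT_of_ne hxy with h' | h'
  exacts [h', (h.asymm (E.pathLT_ext h')).elim]

theorem vless_ext_iff {x y : List α} (hxy : x ≠ y) :
    VLess (E.ext x) (E.ext y) ↔ VLess x y := by
  rw [vless_iff_pathLT hxy, vless_iff_pathLT (E.ext_injective.ne hxy), E.pathLT_ext_iff hxy]

end VStarExtension

theorem isChain_cons_vstar {a : α} {z : List α} (h : List.IsChain (· ≤ ·) (a :: z)) :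
    List.IsChain (· ≤ ·) (a :: vstar z) := by
  rw [vstar_of_isChain (List.isChain_cons.1 h).2]
  rw [List.isChain_iff_pairwise] at h ⊢
  exact h.sublist ((List.tail_sublist z).cons_cons a)

theorem colexLE_cons_vstar {a : α} {z : List α} (h : List.IsChain (· ≤ ·) (a :: z))
    (hz : z ≠ []) : ColexLE (a :: vstar z) z := by
  obtain ⟨b, t, rfl⟩ := List.exists_cons_of_ne_nil hz
  rw [vstar_of_isChain (List.isChain_cons.1 h).2, List.tail_cons]
  rcases (List.isChain_cons_cons.1 h).1.eq_or_lt with rfl | hab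
  exacts [Or.inl rfl, Or.inr (Or.inr ⟨rfl, hab⟩)]

theorem colexLT_cons_vstar {a : α} {z : List α} (h : ¬ List.IsChain (· ≤ ·) (a :: z)) :
    ColexLT z (a :: vstar z) := by
  have hz : z ≠ [] := by rintro rfl; exact h (List.isChain_singleton a)
  obtain ⟨P, c, Q, rfl, hQ, hP⟩ := exists_eq_append_cons_isChain hz
  rw [vstar_append_cons hQ hP, List.append_cons, ← List.cons_append, colexLT_append_right_iff]
  apply colexLT_append_singleton_cons
  rcases List.eq_nil_or_concat P with rfl | ⟨P, e, rfl⟩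
  · exact lt_of_not_ge fun hac => h (List.isChain_cons_cons.2 ⟨hac, hQ⟩)
  · simpa using hP e (by simp)

theorem vstar_append_singleton_of_lt {z : List α} {b : α} (h : ∀ c ∈ z.getLast?, b < c) :
    vstar (z ++ [b]) = z := by
  simpa using vstar_append_cons (Q := []) (List.isChain_singleton b) h

theorem vstar_append_singleton_of_le {z : List α} {b c : α} (hc : c ∈ z.getLast?)
    (h : c ≤ b) :
    vstar (z ++ [b]) = vstar z ++ [b] := by
  have hz : z ≠ [] := by rintro rfl; simp at hc
  obtain ⟨P, d, Q, rfl, hQ, hP⟩ := exists_eq_append_cons_isChain hz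
  have hQb : List.IsChain (· ≤ ·) (d :: (Q ++ [b])) := by
    rw [← List.cons_append]
    refine hQ.append (List.isChain_singleton b) fun x hx y hy => ?_
    rw [List.getLast?_append_cons] at hc
    simp_all
  rw [List.append_assoc, List.cons_append, vstar_append_cons hQb hP, vstar_append_cons hQ hP,
    List.append_assoc]

theorem forall_lt_mem_getLast?_vstar {z : List α} {b : α} (h : ∀ c ∈ z.getLast?, b < c) :
    ∀ c ∈ (vstar z).getLast?, b < c := by
  rcases eq_or_ne z [] with rfl | hz
  · simp [vstar]
  obtain ⟨P, c, Q, rfl, hQ, hP⟩ := exists_eq_append_cons_isChain hz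
  rw [vstar_append_cons hQ hP]
  rcases Q with _ | ⟨d, Q⟩
  · exact fun e he => (h c (by simp)).trans (hP e (by simpa using he))
  · simpa [List.getLast?_append_cons, List.getLast?_cons_cons] using h

theorem colexLT_vstar_append_singleton {z : List α} {b : α} (hz : z ≠ [])
    (h : ∀ c ∈ z.getLast?, b < c) : ColexLT (vstar z ++ [b]) z := by
  obtain ⟨P, c, Q, rfl, hQ, hP⟩ := exists_eq_append_cons_isChain hz
  rw [vstar_append_cons hQ hP, List.append_assoc, colexLT_append_left_iff]
  apply colexLT_append_singleton_cons
  exact h _ (by rw [List.getLast?_append_cons]; exact List.getLast?_eq_some_getLast _)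

theorem colexLE_vstar_append_singleton {z : List α} {b c : α} (hc : c ∈ z.getLast?)
    (h : c ≤ b) :
    ColexLE z (vstar z ++ [b]) := by
  have hz : z ≠ [] := by rintro rfl; simp at hc
  obtain ⟨P, d, Q, rfl, hQ, hP⟩ := exists_eq_append_cons_isChain hz
  rw [vstar_append_cons hQ hP, List.append_assoc]
  have hlast : (d :: Q).getLast (List.cons_ne_nil d Q) = c := by
    rw [List.getLast?_append_cons, List.getLast?_eq_some_getLast (List.cons_ne_nil d Q)] at hc
    exact Option.some_inj.1 hc
  rcases colexLE_cons_append_singleton hQ (hlast ▸ h) with heq | hlt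
  exacts [Or.inl (congrArg (P ++ ·) heq), Or.inr ((colexLT_append_left_iff P).2 hlt)]

namespace VStarExtension

def cons (a : α) : VStarExtension α where
  ext := (a :: ·)
  Stable z := List.IsChain (· ≤ ·) (a :: z)
  length_ext _ := rfl
  vstar_ext_of_stable h := if_pos h
  vstar_ext_of_not_stable h := if_neg h
  stable_vstar := isChain_cons_vstar
  colexLT_ext := Or.inl
  ext_vstar_le := colexLE_cons_vstar
  le_ext_vstar h := Or.inr (colexLT_cons_vstar h)

def concat (b : α) : VStarExtension α where
  ext := (· ++ [b])
  Stable z := ∀ c ∈ z.getLast?, b < c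
  length_ext _ := List.length_append
  vstar_ext_of_stable := vstar_append_singleton_of_lt
  vstar_ext_of_not_stable h := by
    simp only [not_forall, not_lt] at h
    obtain ⟨c, hc, hcb⟩ := h
    exact vstar_append_singleton_of_le hc hcb
  stable_vstar := forall_lt_mem_getLast?_vstar
  colexLT_ext := (colexLT_append_right_iff [b]).2
  ext_vstar_le h hz := Or.inr (colexLT_vstar_append_singleton hz h)
  le_ext_vstar h := by
    simp only [not_forall, not_lt] at h
    obtain ⟨c, hc, hcb⟩ := h
    exact colexLE_vstar_append_singleton hc hcb

end VStarExtension

theorem vless_append_left_iff (u : List α) {x y : List α} (hxy : x ≠ y) :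
    VLess (u ++ x) (u ++ y) ↔ VLess x y := by
  induction u with
  | nil => rfl
  | cons a u ih =>
    exact ((VStarExtension.cons a).vless_ext_iff fun h => hxy (List.append_cancel_left h)).trans ih

theorem vless_append_right_iff (v : List α) {x y : List α} (hxy : x ≠ y) :
    VLess (x ++ v) (y ++ v) ↔ VLess x y := by
  induction v using List.reverseRecOn with
  | nil => simp
  | append_singleton v b ih =>
    rw [← List.append_assoc, ← List.append_assoc]
    exact ((VStarExtension.concat b).vless_ext_iff
      fun h => hxy (List.append_cancel_right h)).trans ih

/-- V-order is invariant under a common prefix and a common suffix: for any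
strings `u`, `v` and distinct strings `x`, `y`,
`x ≺ y ⟺ uxv ≺ uyv`. -/
theorem vless_context_iff {α : Type*} [LinearOrder α]
    (u v x y : List α) (hxy : x ≠ y) :
    VLess x y ↔ VLess (u ++ x ++ v) (u ++ y ++ v) := by
  have hxv : x ++ v ≠ y ++ v := fun h => hxy (List.append_cancel_right h)
  rw [List.append_assoc, List.append_assoc, vless_append_left_iff u hxv,
    vless_append_right_iff v hxy]
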